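/- arXiv:2002.00576 — 4 statements merged into one kernel-verified Lean document; each statement's English description precedes it below -/
import Mathlib

section
/- For all β with 0 ≤ β ≤ 1, the function P_β(z) = -((1-z)/2)·log((1-z)/2) - ((1+z)/2)·log((1+z)/2) + (β/2)·z² on [-1,1] attains its maximum uniquely at z = 0, with maximum value log 2. -/
/-!
Writing `p = (1 + z) / 2`, the pressure is `P_β(z) = H(p) + β z² / 2` with `H` the binary entropy.
The entropy loses at least a quadratic amount away from its maximum `log 2` at `p = 1/2`:
`H(p) < log 2 - 2 (p - 1/2)² = log 2 - z² / 2` for `p ≠ 1/2`. Indeed `H(p) + 2 (p - 1/2)²` is strictly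
decreasing on `[1/2, 1]`, because its derivative `4p - 2 - log (p / (1 - p))` is negative, which is
`2x < log ((1 + x) / (1 - x))` for `x = 2p - 1 ∈ (0, 1)`, read off the artanh series. For `β ≤ 1`
the energy `β z² / 2` cannot make up this loss.
-/

open Real Set

/-- Curie-Weiss pressure function at inverse temperature `β`. -/
noncomputable def CWP (β z : ℝ) : ℝ :=
  -((1 - z) / 2) * Real.log ((1 - z) / 2) - ((1 + z) / 2) * Real.log ((1 + z) / 2)
    + β / 2 * z ^ 2

namespace Real

theorem two_mul_lt_log_one_add_sub_log_one_sub {x : ℝ} (hx₀ : 0 < x) (hx₁ : x < 1) :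
    2 * x < log (1 + x) - log (1 - x) := by
  have hsum := hasSum_log_sub_log_of_abs_lt_one (abs_lt.2 ⟨by linarith, hx₁⟩)
  have hle := sum_le_hasSum ({0, 1} : Finset ℕ) (fun k _ => by positivity) hsum
  norm_num at hle
  nlinarith [pow_pos hx₀ 3]

theorem four_mul_sub_two_lt_log_sub_log_one_sub {p : ℝ} (hp₀ : 2⁻¹ < p) (hp₁ : p < 1) :
    4 * p - 2 < log p - log (1 - p) := by
  have h := two_mul_lt_log_one_add_sub_log_one_sub (x := 2 * p - 1) (by linarith) (by linarith)
  rw [show 1 + (2 * p - 1) = 2 * p by ring, show 1 - (2 * p - 1) = 2 * (1 - p) by ring,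
    log_mul two_ne_zero (by linarith), log_mul two_ne_zero (by linarith)] at h
  linarith

theorem strictAntiOn_binEntropy_add_two_mul_sq :
    StrictAntiOn (fun p => binEntropy p + 2 * (p - 2⁻¹) ^ 2) (Icc 2⁻¹ 1) := by
  refine strictAntiOn_of_deriv_neg (convex_Icc _ _) (by fun_prop) fun p hp => ?_
  rw [interior_Icc] at hp
  have hsq : HasDerivAt (fun p : ℝ => 2 * (p - 2⁻¹) ^ 2) (4 * (p - 2⁻¹)) p :=
    ((hasDerivAt_id' p).sub_const 2⁻¹ |>.fun_pow 2).const_mul 2 |>.congr_deriv (by ring)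
  have hderiv : HasDerivAt (fun p => binEntropy p + 2 * (p - 2⁻¹) ^ 2)
      (log (1 - p) - log p + 4 * (p - 2⁻¹)) p :=
    (hasDerivAt_binEntropy (by linarith [hp.1]) hp.2.ne).add hsq
  rw [hderiv.deriv]
  linarith [four_mul_sub_two_lt_log_sub_log_one_sub hp.1 hp.2]

theorem binEntropy_lt_log_two_sub_two_mul_sq {p : ℝ} (hp₀ : 0 ≤ p) (hp₁ : p ≤ 1)
    (hp : p ≠ 2⁻¹) : binEntropy p < log 2 - 2 * (p - 2⁻¹) ^ 2 := by
  wlog hhalf : 2⁻¹ < p generalizing p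
  · have h := this (p := 1 - p) (by linarith) (by linarith) (by contrapose! hp; linarith)
      (by linarith [lt_of_le_of_ne (not_lt.1 hhalf) hp])
    rw [binEntropy_one_sub] at h
    linarith
  have h := strictAntiOn_binEntropy_add_two_mul_sq (a := 2⁻¹) (b := p)
    (by norm_num) ⟨hhalf.le, hp₁⟩ hhalf
  simp only [sub_self, binEntropy_two_inv] at h
  linarith

end Real

theorem CWP_eq_binEntropy (β z : ℝ) : CWP β z = binEntropy ((1 + z) / 2) + β / 2 * z ^ 2 := by
  rw [CWP, binEntropy, show 1 - (1 + z) / 2 = (1 - z) / 2 by ring, log_inv, log_inv]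
  ring

theorem curie_weiss_unique_max_general (β : ℝ) (hβ1 : β ≤ 1) :
    CWP β 0 = Real.log 2 ∧
    ∀ z ∈ Set.Icc (-1 : ℝ) 1, z ≠ 0 → CWP β z < Real.log 2 := by
  refine ⟨by simp [CWP_eq_binEntropy, one_div], fun z ⟨hz₀, hz₁⟩ hz => ?_⟩
  have hentropy := binEntropy_lt_log_two_sub_two_mul_sq (p := (1 + z) / 2) (by linarith)
    (by linarith) (by contrapose! hz; linarith)
  have henergy : β * z ^ 2 ≤ z ^ 2 := mul_le_of_le_one_left (sq_nonneg z) hβ1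
  rw [CWP_eq_binEntropy]
  nlinarith

theorem curie_weiss_unique_max (β : ℝ) (hβ0 : 0 ≤ β) (hβ1 : β ≤ 1) :
    CWP β 0 = Real.log 2 ∧
    ∀ z ∈ Set.Icc (-1 : ℝ) 1, z ≠ 0 → CWP β z < Real.log 2 :=
  curie_weiss_unique_max_general β hβ1
end

section
/- For all β > 1, the function P_β(z) = -((1-z)/2)·log((1-z)/2) - ((1+z)/2)·log((1+z)/2) + (β/2)·z² on (-1,1) has exactly three critical points: 0 and ±z_β for some z_β ∈ (0,1); moreover z = 0 is a strict local minimum and ±z_β are the two global maximizers of P_β on [-1,1]. -/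
/-- Derivative of the Curie-Weiss pressure: `P_β'(z) = (1/2) log((1-z)/(1+z)) + βz`. -/
noncomputable def CWPderiv (β z : ℝ) : ℝ :=
  (1 / 2) * Real.log ((1 - z) / (1 + z)) + β * z

/-! The critical points of `P_β` are the zeros of the odd function `g = CWPderiv β`. Since
`g' z = β - 1/(1 - z²)` decreases on `[0, 1)`, `g` is strictly concave there; it vanishes at `0`,
is positive just to the right of `0` because `g' 0 = β - 1 > 0`, and tends to `-∞` at `1`. Hence
`g` has exactly one zero `z_β ∈ (0, 1)`, is positive on `(0, z_β)` and negative on `(z_β, 1)`, so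
the even function `P_β` increases on `[0, z_β]` and decreases on `[z_β, 1]`. -/

open Set Topology

namespace StrictConcaveOn

variable {D : Set ℝ} {f : ℝ → ℝ} {a b : ℝ}

theorem pos_between_zeros (hf : StrictConcaveOn ℝ D f) (ha : a ∈ D) (hb : b ∈ D)
    (hfa : f a = 0) (hfb : f b = 0) {x : ℝ} (hx : x ∈ Ioo a b) : 0 < f x := by
  have hab : a < b := hx.1.trans hx.2
  simpa [hfa, hfb] using
    hf.lt_on_openSegment ha hb hab.ne (by rwa [openSegment_eq_Ioo hab])

theorem neg_beyond_zeros (hf : StrictConcaveOn ℝ D f) (ha : a ∈ D) (hfa : f a = 0) (hfb : f b = 0)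
    (hab : a < b) {x : ℝ} (hx : x ∈ D) (hbx : b < x) : f x < 0 := by
  have := hf.lt_on_openSegment ha hx (hab.trans hbx).ne
    (by rw [openSegment_eq_Ioo (hab.trans hbx)]; exact ⟨hab, hbx⟩)
  simpa [hfa, hfb] using this

end StrictConcaveOn

theorem CWP_neg (β z : ℝ) : CWP β (-z) = CWP β z := by
  simp only [CWP, sub_neg_eq_add, ← sub_eq_add_neg]
  ring

theorem CWP_abs (β z : ℝ) : CWP β |z| = CWP β z := by
  rcases abs_choice z with h | h <;> simp only [h, CWP_neg]

theorem CWPderiv_neg (β z : ℝ) : CWPderiv β (-z) = -CWPderiv β z := by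
  have hlog : Real.log ((1 + z) / (1 - z)) = -Real.log ((1 - z) / (1 + z)) := by
    rw [← Real.log_inv, inv_div]
  simp only [CWPderiv, sub_neg_eq_add, ← sub_eq_add_neg, hlog]
  ring

theorem CWPderiv_zero (β : ℝ) : CWPderiv β 0 = 0 := by
  simp [CWPderiv]

theorem continuous_CWP (β : ℝ) : Continuous (CWP β) := by
  have hmul_log := Real.continuous_mul_log
  unfold CWP
  simp only [neg_mul]
  fun_prop

theorem hasDerivAt_CWP (β : ℝ) {z : ℝ} (hz : z ∈ Ioo (-1) 1) :
    HasDerivAt (CWP β) (CWPderiv β z) z := by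
  have hm : (1 - z) / 2 ≠ 0 := by linarith [hz.2]
  have hp : (1 + z) / 2 ≠ 0 := by linarith [hz.1]
  have hu : HasDerivAt (fun z : ℝ => (1 - z) / 2) (-1 / 2) z := by
    simpa using ((hasDerivAt_id z).const_sub 1).div_const 2
  have hv : HasDerivAt (fun z : ℝ => (1 + z) / 2) (1 / 2) z := by
    simpa using ((hasDerivAt_id z).const_add 1).div_const 2
  refine (((hu.neg.mul (hu.log hm)).sub (hv.mul (hv.log hp))).add
    ((hasDerivAt_pow 2 z).const_mul (β / 2))).congr_deriv ?_
  have hlog : Real.log ((1 - z) / (1 + z)) = Real.log ((1 - z) / 2) - Real.log ((1 + z) / 2) := by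
    rw [← Real.log_div hm hp, div_div_div_cancel_right₀ two_ne_zero]
  rw [CWPderiv, hlog, Pi.neg_apply, neg_mul ((1 - z) / 2), mul_div_cancel₀ _ hm,
    mul_div_cancel₀ _ hp]
  ring

theorem hasDerivAt_CWPderiv (β : ℝ) {z : ℝ} (hz : z ∈ Ioo (-1) 1) :
    HasDerivAt (CWPderiv β) (β - 1 / (1 - z ^ 2)) z := by
  have hm : 1 - z ≠ 0 := by linarith [hz.2]
  have hp : 1 + z ≠ 0 := by linarith [hz.1]
  have hq : 1 - z ^ 2 ≠ 0 := by nlinarith [hz.1, hz.2]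
  have hu : HasDerivAt (fun z : ℝ => 1 - z) (-1) z := by
    simpa using (hasDerivAt_id z).const_sub 1
  have hv : HasDerivAt (fun z : ℝ => 1 + z) 1 z := by
    simpa using (hasDerivAt_id z).const_add 1
  have hw : HasDerivAt (fun z : ℝ => β * z) β z := by
    simpa using (hasDerivAt_id z).const_mul β
  refine ((((hu.div hv hp).log (div_ne_zero hm hp)).const_mul (1 / 2)).add hw).congr_deriv ?_
  simp only [Pi.div_apply]
  field_simp
  ring

theorem continuousOn_CWPderiv (β : ℝ) : ContinuousOn (CWPderiv β) (Ioo (-1) 1) :=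
  fun _ hz => (hasDerivAt_CWPderiv β hz).continuousAt.continuousWithinAt

theorem strictConcaveOn_CWPderiv (β : ℝ) : StrictConcaveOn ℝ (Ico 0 1) (CWPderiv β) := by
  have hderiv {x : ℝ} (hx : x ∈ Ico 0 1) : HasDerivAt (CWPderiv β) (β - 1 / (1 - x ^ 2)) x :=
    hasDerivAt_CWPderiv β ⟨by linarith [hx.1], hx.2⟩
  refine StrictAntiOn.strictConcaveOn_of_deriv (convex_Ico 0 1)
    ((continuousOn_CWPderiv β).mono (Ico_subset_Ioo_left (by norm_num))) ?_
  rw [interior_Ico]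
  intro x hx y hy hxy
  rw [(hderiv (Ioo_subset_Ico_self hx)).deriv, (hderiv (Ioo_subset_Ico_self hy)).deriv]
  have : 1 / (1 - x ^ 2) < 1 / (1 - y ^ 2) :=
    one_div_lt_one_div_of_lt (by nlinarith [hy.1, hy.2]) (by nlinarith [hx.1])
  linarith

theorem exists_CWPderiv_pos {β : ℝ} (hβ : 1 < β) : ∃ z ∈ Ioo 0 1, 0 < CWPderiv β z := by
  have hslope := (hasDerivAt_CWPderiv β (z := 0) (by norm_num)).tendsto_slope_zero_right
  have hslope_pos : ∀ᶠ t in 𝓝[>] (0 : ℝ), 0 < t⁻¹ • (CWPderiv β (0 + t) - CWPderiv β 0) :=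
    hslope.eventually (lt_mem_nhds (by norm_num; linarith))
  obtain ⟨t, hpos, ht⟩ := (hslope_pos.and (Ioo_mem_nhdsGT one_pos)).exists
  simp only [zero_add, CWPderiv_zero, sub_zero, smul_eq_mul] at hpos
  exact ⟨t, ht, pos_of_mul_pos_right hpos (inv_nonneg.mpr ht.1.le)⟩

theorem exists_CWPderiv_neg (β : ℝ) : ∃ z ∈ Ioo 0 1, CWPderiv β z < 0 := by
  -- at `z = 1 - e / 2` the logarithmic term is below `-2|β|`, while `β z ≤ |β|`
  set e := Real.exp (-(2 * |β|))
  have he0 : 0 < e := Real.exp_pos _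
  have he1 : e ≤ 1 := Real.exp_le_one_iff.mpr (by linarith [abs_nonneg β])
  refine ⟨1 - e / 2, ⟨by linarith, by linarith⟩, ?_⟩
  have hratio : (1 - (1 - e / 2)) / (1 + (1 - e / 2)) < e := by
    rw [div_lt_iff₀ (by linarith)]
    nlinarith
  have hlog : Real.log ((1 - (1 - e / 2)) / (1 + (1 - e / 2))) < -(2 * |β|) := by
    rw [← Real.log_exp (-(2 * |β|))]
    exact Real.log_lt_log (div_pos (by linarith) (by linarith)) hratio
  have hlin : β * (1 - e / 2) ≤ |β| := by
    calc β * (1 - e / 2) ≤ |β * (1 - e / 2)| := le_abs_self _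
      _ = |β| * (1 - e / 2) := by rw [abs_mul, abs_of_pos (a := 1 - e / 2) (by linarith)]
      _ ≤ |β| := by nlinarith [abs_nonneg β]
  rw [CWPderiv]
  linarith

theorem exists_CWPderiv_sign_change {β : ℝ} (hβ : 1 < β) :
    ∃ z₀ ∈ Ioo 0 1, CWPderiv β z₀ = 0 ∧
      (∀ z ∈ Ioo 0 z₀, 0 < CWPderiv β z) ∧ (∀ z ∈ Ioo z₀ 1, CWPderiv β z < 0) := by
  obtain ⟨a, ha, hga⟩ := exists_CWPderiv_pos hβ
  obtain ⟨c, hc, hgc⟩ := exists_CWPderiv_neg β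
  have hsub : uIcc a c ⊆ Ioo 0 1 := fun x hx =>
    ⟨lt_of_lt_of_le (lt_min ha.1 hc.1) hx.1, lt_of_le_of_lt hx.2 (max_lt ha.2 hc.2)⟩
  obtain ⟨z₀, hz₀, hgz₀⟩ : ∃ z₀ ∈ uIcc a c, CWPderiv β z₀ = 0 :=
    intermediate_value_uIcc
      ((continuousOn_CWPderiv β).mono (hsub.trans (Ioo_subset_Ioo_left (by norm_num))))
      (mem_uIcc.mpr (Or.inr ⟨hgc.le, hga.le⟩))
  have hz₀' := hsub hz₀
  have hconc := strictConcaveOn_CWPderiv β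
  have h0 : (0 : ℝ) ∈ Ico 0 1 := ⟨le_rfl, one_pos⟩
  refine ⟨z₀, hz₀', hgz₀, fun z hz => ?_, fun z hz => ?_⟩
  · exact hconc.pos_between_zeros h0 (Ioo_subset_Ico_self hz₀') (CWPderiv_zero β) hgz₀ hz
  · exact hconc.neg_beyond_zeros h0 (CWPderiv_zero β) hgz₀ hz₀'.1
      ⟨by linarith [hz.1, hz₀'.1], hz.2⟩ hz.1

section SignChange

variable {β z₀ : ℝ}

theorem strictMonoOn_CWP (hz₀ : z₀ < 1) (hpos : ∀ z ∈ Ioo 0 z₀, 0 < CWPderiv β z) :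
    StrictMonoOn (CWP β) (Icc 0 z₀) := by
  refine strictMonoOn_of_deriv_pos (convex_Icc 0 z₀) (continuous_CWP β).continuousOn ?_
  rw [interior_Icc]
  intro z hz
  rw [(hasDerivAt_CWP β ⟨by linarith [hz.1], hz.2.trans hz₀⟩).deriv]
  exact hpos z hz

theorem strictAntiOn_CWP (hz₀ : 0 < z₀) (hneg : ∀ z ∈ Ioo z₀ 1, CWPderiv β z < 0) :
    StrictAntiOn (CWP β) (Icc z₀ 1) := by
  refine strictAntiOn_of_deriv_neg (convex_Icc z₀ 1) (continuous_CWP β).continuousOn ?_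
  rw [interior_Icc]
  intro z hz
  rw [(hasDerivAt_CWP β ⟨by linarith [hz.1], hz.2⟩).deriv]
  exact hneg z hz

theorem CWP_lt_CWP_of_abs_ne (hz₀ : z₀ ∈ Ioo 0 1) (hpos : ∀ z ∈ Ioo 0 z₀, 0 < CWPderiv β z)
    (hneg : ∀ z ∈ Ioo z₀ 1, CWPderiv β z < 0) {z : ℝ} (hz : z ∈ Icc (-1) 1) (hne : |z| ≠ z₀) :
    CWP β z < CWP β z₀ := by
  rw [← CWP_abs]
  have habs : |z| ≤ 1 := abs_le.mpr hz
  rcases hne.lt_or_gt with hlt | hgt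
  · exact strictMonoOn_CWP hz₀.2 hpos ⟨abs_nonneg z, hlt.le⟩ ⟨hz₀.1.le, le_rfl⟩ hlt
  · exact strictAntiOn_CWP hz₀.1 hneg ⟨le_rfl, hz₀.2.le⟩ ⟨hgt.le, habs⟩ hgt

theorem CWPderiv_eq_zero_iff_of_nonneg (hzero : CWPderiv β z₀ = 0)
    (hpos : ∀ z ∈ Ioo 0 z₀, 0 < CWPderiv β z) (hneg : ∀ z ∈ Ioo z₀ 1, CWPderiv β z < 0)
    {z : ℝ} (hz : z ∈ Ico 0 1) : CWPderiv β z = 0 ↔ z = 0 ∨ z = z₀ := by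
  refine ⟨fun h => ?_, ?_⟩
  · rcases hz.1.eq_or_lt with h0 | h0
    · exact Or.inl h0.symm
    rcases lt_trichotomy z z₀ with hlt | heq | hgt
    · exact absurd h (hpos z ⟨h0, hlt⟩).ne'
    · exact Or.inr heq
    · exact absurd h (hneg z ⟨hgt, hz.2⟩).ne
  · rintro (rfl | rfl)
    exacts [CWPderiv_zero β, hzero]

theorem setOf_CWPderiv_eq_zero (hz₀ : z₀ ∈ Ioo 0 1) (hzero : CWPderiv β z₀ = 0)
    (hpos : ∀ z ∈ Ioo 0 z₀, 0 < CWPderiv β z) (hneg : ∀ z ∈ Ioo z₀ 1, CWPderiv β z < 0) :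
    {z ∈ Ioo (-1 : ℝ) 1 | CWPderiv β z = 0} = {-z₀, 0, z₀} := by
  ext z
  have hodd : CWPderiv β z = 0 ↔ CWPderiv β |z| = 0 := by
    rcases abs_choice z with h | h <;> simp [h, CWPderiv_neg]
  have habs_zero : |z| < 1 ∧ CWPderiv β |z| = 0 ↔ |z| = 0 ∨ |z| = z₀ := by
    refine ⟨fun h => (CWPderiv_eq_zero_iff_of_nonneg hzero hpos hneg
      ⟨abs_nonneg z, h.1⟩).mp h.2, fun h => ⟨?_, ?_⟩⟩
    · rcases h with h | h <;> rw [h] <;> linarith [hz₀.2]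
    · exact (CWPderiv_eq_zero_iff_of_nonneg hzero hpos hneg
        ⟨abs_nonneg z, by rcases h with h | h <;> linarith [hz₀.2]⟩).mpr h
  rw [mem_sep_iff, mem_Ioo, ← abs_lt, hodd, habs_zero]
  simp only [abs_eq_zero, abs_eq hz₀.1.le, mem_insert_iff, mem_singleton_iff]
  tauto

end SignChange

theorem curie_weiss_supercritical (β : ℝ) (hβ : 1 < β) :
    ∃ zβ ∈ Set.Ioo (0 : ℝ) 1,
      ({z ∈ Set.Ioo (-1 : ℝ) 1 | CWPderiv β z = 0} = {-zβ, 0, zβ}) ∧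
      (∃ ε > 0, ∀ z : ℝ, z ≠ 0 → |z| < ε → CWP β 0 < CWP β z) ∧
      (∀ z ∈ Set.Icc (-1 : ℝ) 1, CWP β z ≤ CWP β zβ) ∧
      CWP β (-zβ) = CWP β zβ ∧
      (∀ z ∈ Set.Icc (-1 : ℝ) 1, CWP β z = CWP β zβ → z = zβ ∨ z = -zβ) := by
  obtain ⟨z₀, hz₀, hzero, hpos, hneg⟩ := exists_CWPderiv_sign_change hβ
  have hlt {z : ℝ} (hz : z ∈ Icc (-1) 1) (hne : |z| ≠ z₀) : CWP β z < CWP β z₀ :=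
    CWP_lt_CWP_of_abs_ne hz₀ hpos hneg hz hne
  refine ⟨z₀, hz₀, setOf_CWPderiv_eq_zero hz₀ hzero hpos hneg, ⟨z₀, hz₀.1, fun z hz hzε => ?_⟩,
    fun z hz => ?_, CWP_neg β z₀, fun z hz heq => ?_⟩
  · rw [← CWP_abs β z]
    exact strictMonoOn_CWP hz₀.2 hpos ⟨le_rfl, hz₀.1.le⟩ ⟨abs_nonneg z, hzε.le⟩ (abs_pos.mpr hz)
  · by_cases hne : |z| = z₀
    · rw [← CWP_abs, hne]
    · exact (hlt hz hne).le
  · by_contra hne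
    exact (hlt hz fun habs => hne ((abs_eq hz₀.1.le).mp habs)).ne heq
end

section
/- Let T : X → X be a measurable map, φ : X → ℝ with μ(φ) ≤ 0 for all invariant μ, and μ₀ invariant with μ₀(φ) = 0. If μ₀ is an equilibrium measure for β₁φ (i.e. maximizes h(T,·) + β₁·(·)(φ) over invariant measures), then for every β > β₁, μ₀ is an equilibrium measure for βφ, and the set of equilibrium measures of βφ equals {μ invariant : μ(φ) = 0 and h(T,μ) = h(T,μ₀)}, independent of β. -/
open MeasureTheory

/-!
Raising `β` lowers the free energy `ent μ + β μ(φ)` of every invariant `μ` with `μ(φ) < 0`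
and leaves it unchanged when `μ(φ) = 0`. Since `μ₀(φ) = 0`, a maximizer for `β₁` stays a
maximizer, and for `β > β₁` any maximizer must have `μ(φ) = 0` and the entropy of `μ₀`.
-/

section FreeEnergy

variable {α : Type*} {s : Set α} {ent f : α → ℝ} {a : α} {β₁ β : ℝ}

theorem isMaxOn_add_mul_of_le (hf : ∀ x ∈ s, f x ≤ 0) (ha : f a = 0)
    (hmax : IsMaxOn (fun x => ent x + β₁ * f x) s a) (hβ : β₁ ≤ β) :
    IsMaxOn (fun x => ent x + β * f x) s a := by
  refine isMaxOn_iff.2 fun x hx => ?_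
  have hx₁ : ent x + β₁ * f x ≤ ent a + β₁ * f a := isMaxOn_iff.1 hmax x hx
  have hmono : (β - β₁) * f x ≤ 0 := mul_nonpos_of_nonneg_of_nonpos (sub_nonneg.2 hβ) (hf x hx)
  rw [ha] at hx₁ ⊢
  linarith

theorem isMaxOn_add_mul_iff (hf : ∀ x ∈ s, f x ≤ 0) (ha : f a = 0) (has : a ∈ s)
    (hmax : IsMaxOn (fun x => ent x + β₁ * f x) s a) (hβ : β₁ < β) {x : α} (hx : x ∈ s) :
    IsMaxOn (fun y => ent y + β * f y) s x ↔ f x = 0 ∧ ent x = ent a := by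
  constructor
  · intro hxmax
    have hax : ent a + β * f a ≤ ent x + β * f x := isMaxOn_iff.1 hxmax a has
    have hx₁ : ent x + β₁ * f x ≤ ent a + β₁ * f a := isMaxOn_iff.1 hmax x hx
    rw [ha] at hax hx₁
    have hgain : 0 ≤ (β - β₁) * f x := by linarith
    have hfx : f x = 0 :=
      le_antisymm (hf x hx) (nonneg_of_mul_nonneg_right hgain (sub_pos.2 hβ))
    refine ⟨hfx, ?_⟩
    rw [hfx] at hax hx₁
    linarith
  · rintro ⟨hfx, hent⟩
    refine isMaxOn_iff.2 fun y hy => ?_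
    simpa only [ha, hfx, hent] using
      isMaxOn_iff.1 (isMaxOn_add_mul_of_le hf ha hmax hβ.le) y hy

end FreeEnergy

/-- Freezing phase transitions, implication (2) ⇒ (1): if `μ(φ) ≤ 0` for all invariant
`μ`, `μ₀(φ) = 0` and `μ₀` is an equilibrium measure for `β₁φ`, then for every `β > β₁`,
`μ₀` is an equilibrium measure for `βφ` and the set of equilibrium measures of `βφ`
is `{μ invariant : μ(φ) = 0, h(T,μ) = h(T,μ₀)}`, independent of `β`. -/
theorem equilibrium_freezes
    {X : Type*} [MeasurableSpace X] (T : X → X) (φ : X → ℝ) (ent : Measure X → ℝ)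
    (hneg : ∀ μ : Measure X, IsProbabilityMeasure μ → Measure.map T μ = μ →
      ∫ x, φ x ∂μ ≤ 0)
    (μ₀ : Measure X) (h0p : IsProbabilityMeasure μ₀) (h0inv : Measure.map T μ₀ = μ₀)
    (h0φ : ∫ x, φ x ∂μ₀ = 0) (β₁ : ℝ)
    (heq : ∀ μ : Measure X, IsProbabilityMeasure μ → Measure.map T μ = μ →
      ent μ + β₁ * ∫ x, φ x ∂μ ≤ ent μ₀ + β₁ * ∫ x, φ x ∂μ₀) :
    ∀ β > β₁,
      (∀ μ : Measure X, IsProbabilityMeasure μ → Measure.map T μ = μ →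
        ent μ + β * ∫ x, φ x ∂μ ≤ ent μ₀ + β * ∫ x, φ x ∂μ₀) ∧
      {μ : Measure X | IsProbabilityMeasure μ ∧ Measure.map T μ = μ ∧
        ∀ ν : Measure X, IsProbabilityMeasure ν → Measure.map T ν = ν →
          ent ν + β * ∫ x, φ x ∂ν ≤ ent μ + β * ∫ x, φ x ∂μ}
      = {μ : Measure X | IsProbabilityMeasure μ ∧ Measure.map T μ = μ ∧
          ∫ x, φ x ∂μ = 0 ∧ ent μ = ent μ₀} := by
  intro β hβ
  let invariant : Set (Measure X) := {μ | IsProbabilityMeasure μ ∧ Measure.map T μ = μ}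
  have hφ : ∀ μ ∈ invariant, ∫ x, φ x ∂μ ≤ 0 := fun μ hμ => hneg μ hμ.1 hμ.2
  have hmax : IsMaxOn (fun μ => ent μ + β₁ * ∫ x, φ x ∂μ) invariant μ₀ :=
    isMaxOn_iff.2 fun μ hμ => heq μ hμ.1 hμ.2
  have hequil μ (hμ : μ ∈ invariant) :=
    isMaxOn_add_mul_iff hφ h0φ ⟨h0p, h0inv⟩ hmax hβ hμ
  refine ⟨fun μ hp hinv => isMaxOn_iff.1 (isMaxOn_add_mul_of_le hφ h0φ hmax hβ.le) μ ⟨hp, hinv⟩,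
    Set.ext fun μ => ⟨?_, ?_⟩⟩
  · rintro ⟨hp, hinv, hμmax⟩
    exact ⟨hp, hinv, (hequil μ ⟨hp, hinv⟩).1 (isMaxOn_iff.2 fun ν hν => hμmax ν hν.1 hν.2)⟩
  · rintro ⟨hp, hinv, hμ⟩
    exact ⟨hp, hinv, fun ν hpν hinvν => isMaxOn_iff.1 ((hequil μ ⟨hp, hinv⟩).2 hμ) ν ⟨hpν, hinvν⟩⟩
end

section
/- Let h : ℝ → ℝ be the binary-type entropy function h(z) = -z·log z + z (or any bounded continuous h on [r,0] with h(0)=0 and h(z) = o((-z)^α) as z → 0⁻ for some α ∈ (0,1)), bounded above, continuous on [r,0], r < 0, with h(0) = 0. Let F(z) = -(-z)^α for z ≤ 0 with α ∈ (0,1). Then: (a) for all sufficiently large β > 0, h(z) + βF(z) < 0 = h(0) + βF(0) for all z ∈ [r,0), so 0 is the unique maximizer; (b) there exists a least β₀ with h(z) ≤ -β₀F(z) for all z ∈ [r,0], and at β = β₀ there exists z₀ < 0 with h(z₀) + β₀F(z₀) = 0, so the maximum is attained at both 0 and z₀. -/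
/-!
The ratio `g z = h z / (-z) ^ α` extends continuously to `[r, 0]` with `g 0 = 0`, by the
little-o hypothesis, so it attains its maximum `β₀` at some `z₀`. Since `h > 0` somewhere,
`β₀ > 0 = g 0`, forcing `z₀ < 0`. Then `h ≤ β₀ (-z) ^ α` on `[r, 0]` with equality at
`z₀`, which makes `β₀` the least such constant, and every `β > β₀` gives a strict
inequality on `[r, 0)`.
-/

open Filter Set
open scoped Topology

lemma neg_rpow_pos {z : ℝ} (hz : z < 0) (α : ℝ) : 0 < (-z) ^ α :=
  Real.rpow_pos_of_pos (neg_pos.mpr hz) α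

lemma continuousOn_div_neg_rpow {s : Set ℝ} {h : ℝ → ℝ} {α : ℝ} (hs : s ⊆ Iic 0)
    (hcont : ContinuousOn h s) (h0 : h 0 = 0)
    (hlim : Tendsto (fun z => h z / (-z) ^ α) (𝓝[<] 0) (𝓝 0)) :
    ContinuousOn (fun z => h z / (-z) ^ α) s := by
  intro z hz
  rcases (mem_Iic.mp (hs hz)).lt_or_eq with hz_neg | rfl
  · have hpow : ContinuousAt (fun z : ℝ => (-z) ^ α) z :=
      continuous_neg.continuousAt.rpow_const (Or.inl (neg_ne_zero.mpr hz_neg.ne))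
    exact (hcont z hz).div hpow.continuousWithinAt (neg_rpow_pos hz_neg α).ne'
  · have hIio : ContinuousWithinAt (fun z => h z / (-z) ^ α) (Iio 0) 0 := by
      simpa [ContinuousWithinAt, h0] using hlim
    exact (continuousWithinAt_Iio_iff_Iic.mp hIio).mono hs

lemma le_mul_neg_rpow_of_forall_div_le {s : Set ℝ} {h : ℝ → ℝ} {α β : ℝ}
    (hs : s ⊆ Iic 0) (h0 : h 0 = 0) (hβ : 0 ≤ β) (hle : ∀ z ∈ s, h z / (-z) ^ α ≤ β) :
    ∀ z ∈ s, h z ≤ β * (-z) ^ α := by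
  intro z hz
  rcases (mem_Iic.mp (hs hz)).lt_or_eq with hz_neg | rfl
  · exact (div_le_iff₀ (neg_rpow_pos hz_neg α)).mp (hle z hz)
  · rw [h0]
    exact mul_nonneg hβ (Real.rpow_nonneg (by simp) α)

theorem nonlinear_freezing_transition_general (r : ℝ) (α : ℝ)
    (h : ℝ → ℝ) (hcont : ContinuousOn h (Set.Icc r 0)) (h0 : h 0 = 0)
    (hlittleo : Tendsto (fun z => h z / (-z) ^ α) (𝓝[<] (0 : ℝ)) (𝓝 0))
    (hpos : ∃ z ∈ Set.Ico r 0, 0 < h z) :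
    (∃ B : ℝ, ∀ β ≥ B, ∀ z ∈ Set.Ico r 0, h z + β * (-(-z) ^ α) < 0) ∧
    (∃ β₀ > 0, (∀ z ∈ Set.Icc r 0, h z ≤ β₀ * (-z) ^ α) ∧
      (∀ β : ℝ, (∀ z ∈ Set.Icc r 0, h z ≤ β * (-z) ^ α) → β₀ ≤ β) ∧
      ∃ z₀ ∈ Set.Ico r 0, h z₀ + β₀ * (-(-z₀) ^ α) = 0) := by
  obtain ⟨zp, hzp, hzp_pos⟩ := hpos
  set g : ℝ → ℝ := fun z => h z / (-z) ^ α
  have hIcc : Icc r (0 : ℝ) ⊆ Iic 0 := fun _ hz => hz.2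
  obtain ⟨z₀, hz₀, hmax⟩ := isCompact_Icc.exists_isMaxOn ⟨zp, Ico_subset_Icc_self hzp⟩
    (continuousOn_div_neg_rpow hIcc hcont h0 hlittleo)
  have hβ₀ : 0 < g z₀ :=
    (div_pos hzp_pos (neg_rpow_pos hzp.2 α)).trans_le (hmax (Ico_subset_Icc_self hzp))
  have hz₀_neg : z₀ < 0 := hz₀.2.lt_of_ne (by rintro rfl; simp [g, h0] at hβ₀)
  have hbound : ∀ z ∈ Icc r 0, h z ≤ g z₀ * (-z) ^ α :=
    le_mul_neg_rpow_of_forall_div_le hIcc h0 hβ₀.le fun z hz => hmax hz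
  have htouch : h z₀ = g z₀ * (-z₀) ^ α :=
    (div_mul_cancel₀ _ (neg_rpow_pos hz₀_neg α).ne').symm
  refine ⟨⟨g z₀ + 1, fun β hβ z hz => ?_⟩, g z₀, hβ₀, hbound, fun β hβ => ?_,
    z₀, ⟨hz₀.1, hz₀_neg⟩, by linarith⟩
  · have hlt : g z₀ * (-z) ^ α < β * (-z) ^ α :=
      mul_lt_mul_of_pos_right (by linarith) (neg_rpow_pos hz.2 α)
    linarith [hbound z (Ico_subset_Icc_self hz)]
  · exact le_of_mul_le_mul_right (htouch ▸ hβ z₀ hz₀) (neg_rpow_pos hz₀_neg α)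

/-- Analytic core of the nonlinear freezing phase transition: with `F(z) = -(-z)^α`,
(a) for all large `β` the function `h + βF` is negative on `[r,0)` so `0` is the unique
maximizer; (b) there is a least `β₀` with `h ≤ -β₀ F` on `[r,0]`, and at `β₀` there is a
second touching point `z₀ < 0` where `h(z₀) + β₀ F(z₀) = 0`. -/
theorem nonlinear_freezing_transition (r : ℝ) (hr : r < 0) (α : ℝ)
    (hα0 : 0 < α) (hα1 : α < 1)
    (h : ℝ → ℝ) (hcont : ContinuousOn h (Set.Icc r 0)) (h0 : h 0 = 0)
    (hbdd : ∃ M : ℝ, ∀ z ∈ Set.Icc r 0, h z ≤ M)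
    (hlittleo : Tendsto (fun z => h z / (-z) ^ α) (𝓝[<] (0 : ℝ)) (𝓝 0))
    (hpos : ∃ z ∈ Set.Ico r 0, 0 < h z) :
    (∃ B : ℝ, ∀ β ≥ B, ∀ z ∈ Set.Ico r 0, h z + β * (-(-z) ^ α) < 0) ∧
    (∃ β₀ > 0, (∀ z ∈ Set.Icc r 0, h z ≤ β₀ * (-z) ^ α) ∧
      (∀ β : ℝ, (∀ z ∈ Set.Icc r 0, h z ≤ β * (-z) ^ α) → β₀ ≤ β) ∧
      ∃ z₀ ∈ Set.Ico r 0, h z₀ + β₀ * (-(-z₀) ^ α) = 0) :=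
  nonlinear_freezing_transition_general r α h hcont h0 hlittleo hpos
end
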